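/- For S ⊆ F ⊆ V, let CC(F) be the union of S with the set of vertices of F joined to some vertex of S by a path of bidirected edges lying in F, and let T(F) be the set of ancestors of S in G[CC(F)]. Then the |V|-fold iterate of T starting from V is a fixed point of T and equals the hedge hull Hhull(S, G); in particular, iterating T from V computes Hhull(S, G) in at most |V| steps. -/

import Mathlib

/-- A semi-Markovian graph on vertex type `V`: a DAG of directed edges together with a
symmetric irreflexive relation of bidirected edges. `dir x y` means there is a directed
edge from `x` to `y`, i.e. `x` is a parent of `y`. -/
structure SemiMarkovian (V : Type*) where
  dir : V → V → Prop
  bid : V → V → Prop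
  bid_symm : ∀ x y, bid x y → bid y x
  bid_irrefl : ∀ x, ¬ bid x x
  acyclic : ∀ x, ¬ Relation.TransGen dir x x

namespace SemiMarkovian

variable {V : Type*}

/-- The induced subgraph of `G` on the vertex set `W`. -/
def induce (G : SemiMarkovian V) (W : Set V) : SemiMarkovian V where
  dir a b := a ∈ W ∧ b ∈ W ∧ G.dir a b
  bid a b := a ∈ W ∧ b ∈ W ∧ G.bid a b
  bid_symm := fun x y h => ⟨h.2.1, h.1, G.bid_symm x y h.2.2⟩
  bid_irrefl := fun x h => G.bid_irrefl x h.2.2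
  acyclic := fun x h =>
    G.acyclic x (Relation.TransGen.mono (p := G.dir) (fun _ _ hab => hab.2.2) x x h)

/-- There is a directed path (possibly of length zero) from `x` to `y` all of whose
vertices lie in `F`. -/
def DirPathIn (G : SemiMarkovian V) (F : Set V) (x y : V) : Prop :=
  x ∈ F ∧ Relation.ReflTransGen (fun a b => b ∈ F ∧ G.dir a b) x y

/-- `x` and `y` are joined by a path of bidirected edges all of whose vertices lie in `F`. -/
def BidConnIn (G : SemiMarkovian V) (F : Set V) (x y : V) : Prop :=
  x ∈ F ∧ Relation.ReflTransGen (fun a b => b ∈ F ∧ G.bid a b) x y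

/-- `x` is an ancestor of the set `S` in `G[F]`. -/
def AncestorIn (G : SemiMarkovian V) (F S : Set V) (x : V) : Prop :=
  ∃ s ∈ S, G.DirPathIn F x s

/-- `G[F]` is a c-component: any two vertices of `F` are joined by a path of bidirected
edges all of whose vertices lie in `F`. -/
def CComponent (G : SemiMarkovian V) (F : Set V) : Prop :=
  ∀ x ∈ F, ∀ y ∈ F, G.BidConnIn F x y

/-- `F` is a hedge formed for `Q[S]` in `G`: `S ⊊ F`, every vertex of `F` is an ancestor of
`S` in `G[F]`, and `G[F]` is a c-component. -/
def IsHedge (G : SemiMarkovian V) (S F : Set V) : Prop :=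
  S ⊂ F ∧ (∀ x ∈ F, G.AncestorIn F S x) ∧ G.CComponent F

/-- The hedge hull of `S` in `G`: the union of `S` with all hedges formed for `Q[S]` in `G`. -/
def Hhull (G : SemiMarkovian V) (S : Set V) : Set V :=
  S ∪ ⋃₀ {F | G.IsHedge S F}

/-- Vertices outside `S` that are parents of some vertex of `S`. -/
def Pa (G : SemiMarkovian V) (S : Set V) : Set V :=
  {x | x ∉ S ∧ ∃ s ∈ S, G.dir x s}

/-- Vertices outside `S` that have a bidirected edge to some vertex of `S`. -/
def Bid (G : SemiMarkovian V) (S : Set V) : Set V :=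
  {x | x ∉ S ∧ ∃ s ∈ S, G.bid x s}

/-- `Pa↔(S) := Pa(S) ∩ Bid(S)`. -/
def PaBid (G : SemiMarkovian V) (S : Set V) : Set V := G.Pa S ∩ G.Bid S

end SemiMarkovian
/-- Iterating the operator `T` (ancestors of `S` in the bidirected component
of `S`) starting from the full vertex set: the `|V|`-fold iterate is a fixed point of `T`
and equals the hedge hull `Hhull(S, G)`. -/
theorem hhull_iterate {V : Type*} [Fintype V] (G : SemiMarkovian V) (S : Set V)
    (hS : G.CComponent S) (T : Set V → Set V)
    (hT : ∀ F : Set V,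
      T F = {x | G.AncestorIn (S ∪ {y ∈ F | ∃ s ∈ S, G.BidConnIn F y s}) S x}) :
    T (T^[Fintype.card V] Set.univ) = T^[Fintype.card V] Set.univ ∧
      T^[Fintype.card V] Set.univ = G.Hhull S := by
  classical
  set C : Set V → Set V := fun F => S ∪ {y ∈ F | ∃ s ∈ S, G.BidConnIn F y s} with hC
  -- monotonicity lemmas
  have hBmono : ∀ (F F' : Set V) (x y : V), F ⊆ F' → G.BidConnIn F x y →
      G.BidConnIn F' x y := by
    rintro F F' x y h ⟨hx, hp⟩
    exact ⟨h hx, Relation.ReflTransGen.mono (p := fun a b => b ∈ F' ∧ G.bid a b)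
      (fun a b hab => ⟨h hab.1, hab.2⟩) _ _ hp⟩
  have hDmono : ∀ (F F' : Set V) (x y : V), F ⊆ F' → G.DirPathIn F x y →
      G.DirPathIn F' x y := by
    rintro F F' x y h ⟨hx, hp⟩
    exact ⟨h hx, Relation.ReflTransGen.mono (p := fun a b => b ∈ F' ∧ G.dir a b)
      (fun a b hab => ⟨h hab.1, hab.2⟩) _ _ hp⟩
  have hBsymm : ∀ (F : Set V) (x y : V), G.BidConnIn F x y → G.BidConnIn F y x := by
    rintro F x y ⟨hx, hp⟩
    induction hp with
    | refl => exact ⟨hx, Relation.ReflTransGen.refl⟩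
    | tail _ hbc ih =>
      exact ⟨hbc.1,
        (Relation.ReflTransGen.single ⟨ih.1, G.bid_symm _ _ hbc.2⟩).trans ih.2⟩
  have hBtrans : ∀ (F : Set V) (x y z : V), G.BidConnIn F x y → G.BidConnIn F y z →
      G.BidConnIn F x z := by
    rintro F x y z ⟨hx, h1⟩ ⟨_, h2⟩
    exact ⟨hx, h1.trans h2⟩
  have hCmono : ∀ F F' : Set V, F ⊆ F' → C F ⊆ C F' := by
    rintro F F' h x (hx | ⟨hxF, s, hs, hconn⟩)
    · exact Or.inl hx
    · exact Or.inr ⟨h hxF, s, hs, hBmono F F' _ _ h hconn⟩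
  have hTmono : ∀ F F' : Set V, F ⊆ F' → T F ⊆ T F' := by
    intro F F' h x hx
    rw [hT] at hx ⊢
    obtain ⟨s, hs, hp⟩ := hx
    exact ⟨s, hs, hDmono _ _ _ _ (hCmono F F' h) hp⟩
  have hSsubT : ∀ F : Set V, S ⊆ T F := by
    intro F x hx
    rw [hT]
    exact ⟨x, hx, Or.inl hx, Relation.ReflTransGen.refl⟩
  have hTsubC : ∀ F : Set V, T F ⊆ C F := by
    intro F x hx
    rw [hT] at hx
    obtain ⟨s, hs, hxC, _⟩ := hx
    exact hxC
  have hCsub : ∀ F : Set V, S ⊆ F → C F ⊆ F := by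
    rintro F hSF x (hx | ⟨hxF, _⟩)
    · exact hSF hx
    · exact hxF
  set F : ℕ → Set V := fun n => T^[n] Set.univ with hF
  have hFsucc : ∀ n, F (n + 1) = T (F n) := fun n => Function.iterate_succ_apply' T n _
  have hanti : ∀ n, F (n + 1) ⊆ F n := by
    intro n
    induction n with
    | zero => exact Set.subset_univ _
    | succ n ih =>
      calc F (n + 1 + 1) = T (F (n + 1)) := hFsucc _
        _ ⊆ T (F n) := hTmono _ _ ih
        _ = F (n + 1) := (hFsucc _).symm
  have hSF2 : ∀ n, S ⊆ F n := by
    intro n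
    cases n with
    | zero => exact Set.subset_univ _
    | succ n => rw [hFsucc]; exact hSsubT _
  -- stabilization
  have hstab : ∃ k ≤ Fintype.card V, F (k + 1) = F k := by
    by_contra h
    push_neg at h
    have hcard : ∀ k, k ≤ Fintype.card V → (F k).ncard + k ≤ Fintype.card V := by
      intro k
      induction k with
      | zero =>
        intro _
        simp [hF, Set.ncard_univ, Nat.card_eq_fintype_card]
      | succ n ih =>
        intro hk
        have h1 := ih (Nat.le_of_succ_le hk)
        have hlt : (F (n + 1)).ncard < (F n).ncard :=
          Set.ncard_lt_ncard ⟨hanti n, fun hsub =>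
            h n (Nat.le_of_succ_le hk) (Set.Subset.antisymm (hanti n) hsub)⟩
            (Set.toFinite _)
        omega
    have h0 : (F (Fintype.card V)).ncard = 0 := by
      have := hcard _ le_rfl; omega
    have hemp : F (Fintype.card V) = ∅ := by
      rwa [Set.ncard_eq_zero (Set.toFinite _)] at h0
    exact h (Fintype.card V) le_rfl
      ((Set.subset_empty_iff.mp (hemp ▸ hanti _)).trans hemp.symm)
  obtain ⟨k, hk, hfix⟩ := hstab
  have hall : ∀ n, k ≤ n → F n = F k := by
    intro n hn
    induction n, hn using Nat.le_induction with
    | base => rfl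
    | succ n hn ih => rw [hFsucc n, ih, ← hFsucc k, hfix]
  have hW : F (Fintype.card V) = F k := hall _ hk
  have hfixW : T (F (Fintype.card V)) = F (Fintype.card V) := by
    rw [hW, ← hFsucc, hfix]
  have hSW : S ⊆ F (Fintype.card V) := hSF2 _
  have hCW : C (F (Fintype.card V)) = F (Fintype.card V) := by
    refine Set.Subset.antisymm (hCsub _ hSW) ?_
    intro x hx
    exact hTsubC _ (hfixW.symm ▸ hx)
  have hWsubH : F (Fintype.card V) ⊆ G.Hhull S := by
    by_cases hWS : F (Fintype.card V) = S
    · rw [hWS]; exact Set.subset_union_left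
    · -- the fixed point is a hedge
      have hss : S ⊂ F (Fintype.card V) := hSW.ssubset_of_ne (fun h => hWS h.symm)
      have hanc : ∀ x ∈ F (Fintype.card V),
          G.AncestorIn (F (Fintype.card V)) S x := by
        intro x hx
        rw [← hfixW, hT] at hx
        obtain ⟨s, hsS, hp⟩ := hx
        exact ⟨s, hsS, hDmono _ _ _ _ hCW.subset hp⟩
      -- S is nonempty
      obtain ⟨z, hzW, hzS⟩ := Set.exists_of_ssubset hss
      obtain ⟨s0, hs0, _⟩ := hanc z hzW
      have hconn : ∀ x ∈ F (Fintype.card V),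
          G.BidConnIn (F (Fintype.card V)) x s0 := by
        intro x hx
        have hx' : x ∈ C (F (Fintype.card V)) := hCW.symm ▸ hx
        rcases hx' with hxS | ⟨hxW, s, hsS, hcb⟩
        · exact hBmono _ _ _ _ hSW (hS x hxS s0 hs0)
        · exact hBtrans _ _ _ _ hcb (hBmono _ _ _ _ hSW (hS s hsS s0 hs0))
      have hcc : G.CComponent (F (Fintype.card V)) := by
        intro x hx y hy
        exact hBtrans _ _ _ _ (hconn x hx) (hBsymm _ _ _ (hconn y hy))
      intro x hx
      exact Or.inr ⟨F (Fintype.card V), ⟨hss, hanc, hcc⟩, hx⟩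
  have hHsubF : ∀ n, G.Hhull S ⊆ F n := by
    intro n
    induction n with
    | zero => exact Set.subset_univ _
    | succ n ih =>
      rw [hFsucc]
      rintro x (hxS | ⟨E, hE, hxE⟩)
      · exact hSsubT _ hxS
      · obtain ⟨hssE, hancE, hccE⟩ := hE
        have hEF : E ⊆ F n := fun y hy => ih (Or.inr ⟨E, ⟨hssE, hancE, hccE⟩, hy⟩)
        have hEC : E ⊆ C (F n) := by
          intro y hy
          obtain ⟨z, hzE, hzS⟩ := Set.exists_of_ssubset hssE
          obtain ⟨s, hsS, _⟩ := hancE z hzE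
          exact Or.inr ⟨hEF hy, s, hsS,
            hBmono _ _ _ _ hEF (hccE y hy s (hssE.1 hsS))⟩
        obtain ⟨s, hsS, hp⟩ := hancE x hxE
        rw [hT]
        exact ⟨s, hsS, hDmono _ _ _ _ hEC hp⟩
  refine ⟨hfixW, Set.Subset.antisymm hWsubH (hHsubF _)⟩
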